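/- Suppose for every faulty set F with |F| ≤ f: (i) the only successor of 0̄ is 1̄ and the only successor of 1̄ is 0̄ in G_F(A), and (ii) every directed walk of length t avoiding {0̄, 1̄} is impossible (B_F(t) = ∅). Then every execution (x⁰, x¹, …) of A with faulty set F satisfies: x^t ∈ {0̄, 1̄}, and for all r ≥ t, x^{r+1} is the unique alternation partner of x^r; hence A stabilises in time t. -/
import Mathlib


/-- Configuration `y` is reachable from `x` (given faulty set `F`): for each non-faulty
node `i` there is an observed configuration agreeing with `x` on all non-faulty
coordinates from which `i` transitions to `y i`. -/
def Reach {n s : ℕ} (A : Fin n → (Fin n → Fin s) → Fin s) (F : Finset (Fin n))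
    (x y : Fin n → Fin s) : Prop :=
  ∀ i ∉ F, ∃ u : Fin n → Fin s, (∀ j ∉ F, u j = x j) ∧ A i u = y i

/-- Two configurations are equal as actual configurations: they agree on all
non-faulty coordinates. -/
def EqCfg {n s : ℕ} (F : Finset (Fin n)) (x y : Fin n → Fin s) : Prop :=
  ∀ i ∉ F, x i = y i

/-- An execution: each configuration is reachable from its predecessor. -/
def Exec {n s : ℕ} (A : Fin n → (Fin n → Fin s) → Fin s) (F : Finset (Fin n))
    (X : ℕ → Fin n → Fin s) : Prop :=
  ∀ r, Reach A F (X r) (X (r + 1))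

/-- An execution stabilises in time `t`: its `t`-tail is `(0̄, 1̄, 0̄, …)` or
`(1̄, 0̄, 1̄, …)` on the non-faulty nodes. -/
def StabilisesInTime {n s : ℕ} (F : Finset (Fin n)) (X : ℕ → Fin n → Fin s)
    (t : ℕ) : Prop :=
  (∀ j, ∀ i ∉ F, ((X (t + j) i : ℕ) = j % 2)) ∨
  (∀ j, ∀ i ∉ F, ((X (t + j) i : ℕ) = (j + 1) % 2))

/-- Algorithm `A` stabilises in time `t` tolerating `f` faults: for every faulty set
of size at most `f`, every execution stabilises in time `t`. -/
def AlgStabilises {n s : ℕ} (A : Fin n → (Fin n → Fin s) → Fin s) (f t : ℕ) : Prop :=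
  ∀ F : Finset (Fin n), F.card ≤ f → ∀ X : ℕ → Fin n → Fin s,
    Exec A F X → StabilisesInTime F X t

/-- The all-zero configuration. -/
def zeroCfg (n : ℕ) {s : ℕ} (hs : 0 < s) : Fin n → Fin s := fun _ => ⟨0, hs⟩

/-- The all-one configuration. -/
def oneCfg (n : ℕ) {s : ℕ} (hs : 1 < s) : Fin n → Fin s := fun _ => ⟨1, hs⟩

/-- The sets of bad configurations: `Bad 0` is the set of actual configurations other
than `0̄` and `1̄`, and `Bad (d+1) = { x | ∃ y ∈ Bad d, (x, y) ∈ R_F(A) }`. -/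
def Bad {n s : ℕ} (A : Fin n → (Fin n → Fin s) → Fin s) (F : Finset (Fin n))
    (hs : 1 < s) : ℕ → Set (Fin n → Fin s)
  | 0 => {x | ¬ EqCfg F x (zeroCfg n (by omega)) ∧ ¬ EqCfg F x (oneCfg n hs)}
  | (d + 1) => {x | ∃ y ∈ Bad A F hs d, Reach A F x y}

/-- The 'if' direction of Lemma `projt`: if for every faulty set `F` with `|F| ≤ f`
(i) in the projection graph the only successor of `0̄` is `1̄` and vice versa, and
(ii) `B_F(t) = ∅`, then every execution `(x⁰, x¹, …)` with faulty set `F` satisfies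
`x^t ∈ {0̄, 1̄}`, for all `r ≥ t` the configuration `x^{r+1}` is the unique
alternation partner of `x^r`, and the execution stabilises in time `t`. -/
theorem stabilises_of_projection_conditions {n s f t : ℕ} (hs : 1 < s)
    (A : Fin n → (Fin n → Fin s) → Fin s)
    (h1 : ∀ F : Finset (Fin n), F.card ≤ f →
      (∀ y, Reach A F (zeroCfg n (by omega)) y → EqCfg F y (oneCfg n hs)) ∧
      (∀ y, Reach A F (oneCfg n hs) y → EqCfg F y (zeroCfg n (by omega))))
    (h2 : ∀ F : Finset (Fin n), F.card ≤ f → Bad A F hs t = ∅) :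
    ∀ F : Finset (Fin n), F.card ≤ f →
      ∀ X : ℕ → Fin n → Fin s, Exec A F X →
        (EqCfg F (X t) (zeroCfg n (by omega)) ∨ EqCfg F (X t) (oneCfg n hs)) ∧
        (∀ r ≥ t,
          (EqCfg F (X r) (zeroCfg n (by omega)) → EqCfg F (X (r + 1)) (oneCfg n hs)) ∧
          (EqCfg F (X r) (oneCfg n hs) → EqCfg F (X (r + 1)) (zeroCfg n (by omega)))) ∧
        StabilisesInTime F X t := by

  intro F hF X hX
  have hz : 0 < s := by omega
  -- Reach is invariant under EqCfg on the source
  have reach_congr : ∀ x x' y, EqCfg F x x' → Reach A F x y → Reach A F x' y := by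
    intro x x' y hxx hr i hi
    obtain ⟨u, hu, hAu⟩ := hr i hi
    exact ⟨u, fun j hj => (hu j hj).trans (hxx j hj), hAu⟩
  -- alternation step
  have step0 : ∀ r, EqCfg F (X r) (zeroCfg n hz) → EqCfg F (X (r + 1)) (oneCfg n hs) := by
    intro r h
    exact (h1 F hF).1 _ (reach_congr _ _ _ h (hX r))
  have step1 : ∀ r, EqCfg F (X r) (oneCfg n hs) → EqCfg F (X (r + 1)) (zeroCfg n hz) := by
    intro r h
    exact (h1 F hF).2 _ (reach_congr _ _ _ h (hX r))
  -- from X t bad at level 0, propagate back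
  have chain : ∀ k m, X (m + k) ∈ Bad A F hs 0 → X m ∈ Bad A F hs k := by
    intro k
    induction k with
    | zero => intro m h; exact h
    | succ k ih =>
      intro m h
      have : X (m + 1) ∈ Bad A F hs k := ih (m + 1) (by rw [show m + 1 + k = m + (k + 1) by omega]; exact h)
      exact ⟨X (m + 1), this, hX m⟩
  have hXt : EqCfg F (X t) (zeroCfg n hz) ∨ EqCfg F (X t) (oneCfg n hs) := by
    by_contra hc
    push_neg at hc
    have : X 0 ∈ Bad A F hs t := chain t 0 (by simpa [Bad] using hc)
    rw [h2 F hF] at this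
    exact this
  refine ⟨hXt, fun r _ => ⟨step0 r, step1 r⟩, ?_⟩
  rcases hXt with h | h
  · left
    have key : ∀ j, (j % 2 = 0 → EqCfg F (X (t + j)) (zeroCfg n hz)) ∧
        (j % 2 = 1 → EqCfg F (X (t + j)) (oneCfg n hs)) := by
      intro j
      induction j with
      | zero => exact ⟨fun _ => h, fun hj => by omega⟩
      | succ j ih =>
        constructor
        · intro hj
          have : j % 2 = 1 := by omega
          exact step1 (t + j) (ih.2 this)
        · intro hj
          have : j % 2 = 0 := by omega
          exact step0 (t + j) (ih.1 this)
    intro j i hi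
    rcases Nat.mod_two_eq_zero_or_one j with hj | hj
    · rw [hj]; have := (key j).1 hj i hi; simp [this, zeroCfg]
    · rw [hj]; have := (key j).2 hj i hi; simp [this, oneCfg]
  · right
    have key : ∀ j, (j % 2 = 0 → EqCfg F (X (t + j)) (oneCfg n hs)) ∧
        (j % 2 = 1 → EqCfg F (X (t + j)) (zeroCfg n hz)) := by
      intro j
      induction j with
      | zero => exact ⟨fun _ => h, fun hj => by omega⟩
      | succ j ih =>
        constructor
        · intro hj
          have : j % 2 = 1 := by omega
          exact step0 (t + j) (ih.2 this)
        · intro hj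
          have : j % 2 = 0 := by omega
          exact step1 (t + j) (ih.1 this)
    intro j i hi
    rcases Nat.mod_two_eq_zero_or_one j with hj | hj
    · have : (j + 1) % 2 = 1 := by omega
      rw [this]; have := (key j).1 hj i hi; simp [this, oneCfg]
    · have : (j + 1) % 2 = 0 := by omega
      rw [this]; have := (key j).2 hj i hi; simp [this, zeroCfg]
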